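/- The smallest eigenvalue of a 𝓑_p ∩ 𝓐_∞ matrix weight is a scalar reverse Hölder weight: Let n, d ≥ 1 and 1 < p < ∞. If V is a matrix weight on ℝⁿ with V ∈ 𝓑_p ∩ 𝓐_∞, then the scalar function λ₁, where λ₁(x) is the smallest eigenvalue of V(x), belongs to the scalar reverse Hölder class B_p (with a constant depending only on p, the 𝓑_p constant C_V of V, and the 𝓐_∞ data of V). -/

import Mathlib

open MeasureTheory
open scoped ComplexOrder

noncomputable section

/-- The open cube in `ℝⁿ` centered at `x` with half side length `r` (side length `2r`). -/
def cube {n : ℕ} (x : Fin n → ℝ) (r : ℝ) : Set (Fin n → ℝ) :=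
  {y | ∀ i, |y i - x i| < r}

/-- Entrywise integral of a real matrix-valued function over a set. -/
def matInt {n d : ℕ} (V : (Fin n → ℝ) → Matrix (Fin d) (Fin d) ℝ)
    (s : Set (Fin n → ℝ)) : Matrix (Fin d) (Fin d) ℝ :=
  Matrix.of fun i j => ∫ y in s, V y i j

/-- Entrywise average of a real matrix-valued function over a set. -/
def matAvg {n d : ℕ} (V : (Fin n → ℝ) → Matrix (Fin d) (Fin d) ℝ)
    (s : Set (Fin n → ℝ)) : Matrix (Fin d) (Fin d) ℝ :=
  Matrix.of fun i j => ⨍ y in s, V y i j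

/-- The quadratic form `⟨A e, e⟩`. -/
def qf {d : ℕ} (A : Matrix (Fin d) (Fin d) ℝ) (e : Fin d → ℝ) : ℝ :=
  dotProduct e (A.mulVec e)

/-- Squared Euclidean norm of a real vector. -/
def vnormSq {d : ℕ} (e : Fin d → ℝ) : ℝ := ∑ i, e i ^ 2

/-- The Euclidean operator norm of a real square matrix (its largest singular value). -/
def matOpNorm {d : ℕ} (A : Matrix (Fin d) (Fin d) ℝ) : ℝ :=
  sSup {t : ℝ | ∃ e : Fin d → ℝ, vnormSq e = 1 ∧ t = Real.sqrt (vnormSq (A.mulVec e))}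

/-- `V` is a matrix weight: measurable, a.e. symmetric positive semidefinite, and with
locally integrable operator norm. -/
def IsMatrixWeight {n d : ℕ} (V : (Fin n → ℝ) → Matrix (Fin d) (Fin d) ℝ) : Prop :=
  (∀ i j, Measurable fun x => V x i j) ∧
  (∀ᵐ (x : Fin n → ℝ) ∂volume, (V x).PosSemidef) ∧
  ∀ (x : Fin n → ℝ) (r : ℝ), 0 < r → IntegrableOn (fun y => matOpNorm (V y)) (cube x r)

/-- The matrix reverse Hölder class `𝓑_p` with constant `C`. -/
def MemBp {n d : ℕ} (p C : ℝ) (V : (Fin n → ℝ) → Matrix (Fin d) (Fin d) ℝ) : Prop :=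
  (∀ (x : Fin n → ℝ) (r : ℝ), 0 < r →
    IntegrableOn (fun y => matOpNorm (V y) ^ p) (cube x r)) ∧
  ∀ (x : Fin n → ℝ) (r : ℝ), 0 < r → ∀ e : Fin d → ℝ,
    (⨍ y in cube x r, qf (V y) e ^ p) ^ (1 / p) ≤ C * qf (matAvg V (cube x r)) e

/-- The scalar reverse Hölder class `B_p` with constant `C`. -/
def MemBpScalar {n : ℕ} (p C : ℝ) (v : (Fin n → ℝ) → ℝ) : Prop :=
  (∀ (x : Fin n → ℝ) (r : ℝ), 0 < r → IntegrableOn (fun y => v y ^ p) (cube x r)) ∧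
  ∀ (x : Fin n → ℝ) (r : ℝ), 0 < r →
    (⨍ y in cube x r, v y ^ p) ^ (1 / p) ≤ C * ⨍ y in cube x r, v y

/-- The averaged matrix `Ψ(x,r;V) = r^{2-n} ∫_{Q(x,r)} V`. -/
def Psi {n d : ℕ} (x : Fin n → ℝ) (r : ℝ)
    (V : (Fin n → ℝ) → Matrix (Fin d) (Fin d) ℝ) : Matrix (Fin d) (Fin d) ℝ :=
  r ^ ((2 : ℝ) - n) • matInt V (cube x r)

/-- The nondegeneracy class `ND`. -/
def MemND {n d : ℕ} (V : (Fin n → ℝ) → Matrix (Fin d) (Fin d) ℝ) : Prop :=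
  ∀ E : Set (Fin n → ℝ), MeasurableSet E → 0 < volume E → (matInt V E).PosDef

/-- The set of radii used to define the lower auxiliary function. -/
def lowerSet {n d : ℕ} (V : (Fin n → ℝ) → Matrix (Fin d) (Fin d) ℝ)
    (x : Fin n → ℝ) : Set ℝ :=
  {r : ℝ | 0 < r ∧ ∃ e : Fin d → ℝ, vnormSq e = 1 ∧ qf (Psi x r V) e ≤ 1}

/-- The lower auxiliary function `m̲(x,V)`. -/
def mLower {n d : ℕ} (V : (Fin n → ℝ) → Matrix (Fin d) (Fin d) ℝ) (x : Fin n → ℝ) : ℝ :=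
  (sSup (lowerSet V x))⁻¹

/-- The set of radii used to define the upper auxiliary function. -/
def upperSet {n d : ℕ} (V : (Fin n → ℝ) → Matrix (Fin d) (Fin d) ℝ)
    (x : Fin n → ℝ) : Set ℝ :=
  {r : ℝ | 0 < r ∧ matOpNorm (Psi x r V) ≤ 1}

/-- The upper auxiliary function `m̄(x,V)`. -/
def mUpper {n d : ℕ} (V : (Fin n → ℝ) → Matrix (Fin d) (Fin d) ℝ) (x : Fin n → ℝ) : ℝ :=
  (sSup (upperSet V x))⁻¹

/-- The set of radii used to define the scalar auxiliary function. -/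
def scalSet {n : ℕ} (v : (Fin n → ℝ) → ℝ) (x : Fin n → ℝ) : Set ℝ :=
  {r : ℝ | 0 < r ∧ r ^ ((2 : ℝ) - n) * ∫ y in cube x r, v y ≤ 1}

/-- The scalar auxiliary function `m(x,v)`. -/
def mScal {n : ℕ} (v : (Fin n → ℝ) → ℝ) (x : Fin n → ℝ) : ℝ :=
  (sSup (scalSet v x))⁻¹

/-- The positive semidefinite square root of a matrix (junk value `0` off the
positive semidefinite matrices). -/
def msqrt {d : ℕ} (A : Matrix (Fin d) (Fin d) ℝ) : Matrix (Fin d) (Fin d) ℝ :=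
  @dite _ A.PosSemidef (Classical.dec _) (fun h => h.1.eigenvectorUnitary.1 *
    Matrix.diagonal (fun i => Real.sqrt (h.1.eigenvalues i)) * star h.1.eigenvectorUnitary.1) fun _ => 0

/-- The noncommutativity class `NC` with constant `N`. -/
def MemNC {n d : ℕ} (N : ℝ) (V : (Fin n → ℝ) → Matrix (Fin d) (Fin d) ℝ) : Prop :=
  ∀ (x : Fin n → ℝ) (e : Fin d → ℝ),
    N * vnormSq e ≤
      ∫ y in cube x (mLower V x)⁻¹,
        qf (msqrt (V y) * (matInt V (cube x (mLower V x)⁻¹))⁻¹ * msqrt (V y)) e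

/-- The matrix `𝓐_∞` class. -/
def MemAinf {n d : ℕ} (V : (Fin n → ℝ) → Matrix (Fin d) (Fin d) ℝ) : Prop :=
  ∀ ε : ℝ, 0 < ε → ∃ δ : ℝ, 0 < δ ∧ ∀ (x : Fin n → ℝ) (r : ℝ), 0 < r →
    ENNReal.ofReal (1 - ε) * volume (cube x r) ≤
      volume {y ∈ cube x r | (V y - δ • matAvg V (cube x r)).PosSemidef}

/-- The smallest eigenvalue of a symmetric matrix (as the infimum of the Rayleigh
quotient over the unit sphere). -/
def lam1 {d : ℕ} (A : Matrix (Fin d) (Fin d) ℝ) : ℝ :=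
  sInf {t : ℝ | ∃ e : Fin d → ℝ, vnormSq e = 1 ∧ t = qf A e}

/-- Squared Frobenius norm of the Jacobian matrix `Du(x)`. -/
def jacFrobSq {n d : ℕ} (u : (Fin n → ℝ) → Fin d → ℝ) (x : Fin n → ℝ) : ℝ :=
  ∑ j, ∑ i, (fderiv ℝ u x (Pi.single i 1) j) ^ 2

/-! ### Complex (Hermitian) versions -/

/-- The (real-valued) quadratic form `⟨A e, e⟩` of a Hermitian matrix. -/
def qfC {d : ℕ} (A : Matrix (Fin d) (Fin d) ℂ) (e : Fin d → ℂ) : ℝ :=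
  (dotProduct (star e) (A.mulVec e)).re

/-- Squared Euclidean norm of a complex vector. -/
def vnormSqC {d : ℕ} (e : Fin d → ℂ) : ℝ := ∑ i, Complex.normSq (e i)

/-- Entrywise integral of a complex matrix-valued function over a set. -/
def matIntC {n d : ℕ} (V : (Fin n → ℝ) → Matrix (Fin d) (Fin d) ℂ)
    (s : Set (Fin n → ℝ)) : Matrix (Fin d) (Fin d) ℂ :=
  Matrix.of fun i j => ∫ y in s, V y i j

/-- Entrywise average of a complex matrix-valued function over a set. -/
def matAvgC {n d : ℕ} (V : (Fin n → ℝ) → Matrix (Fin d) (Fin d) ℂ)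
    (s : Set (Fin n → ℝ)) : Matrix (Fin d) (Fin d) ℂ :=
  Matrix.of fun i j => ⨍ y in s, V y i j

/-- The Euclidean operator norm of a complex square matrix. -/
def matOpNormC {d : ℕ} (A : Matrix (Fin d) (Fin d) ℂ) : ℝ :=
  sSup {t : ℝ | ∃ e : Fin d → ℂ, vnormSqC e = 1 ∧ t = Real.sqrt (vnormSqC (A.mulVec e))}

/-- `V` is a Hermitian matrix weight. -/
def IsHermWeight {n d : ℕ} (V : (Fin n → ℝ) → Matrix (Fin d) (Fin d) ℂ) : Prop :=
  (∀ i j, Measurable fun x => V x i j) ∧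
  (∀ᵐ (x : Fin n → ℝ) ∂volume, (V x).PosSemidef) ∧
  ∀ (x : Fin n → ℝ) (r : ℝ), 0 < r → IntegrableOn (fun y => matOpNormC (V y)) (cube x r)

/-- The nondegeneracy class `ND` for Hermitian weights. -/
def MemNDC {n d : ℕ} (V : (Fin n → ℝ) → Matrix (Fin d) (Fin d) ℂ) : Prop :=
  ∀ E : Set (Fin n → ℝ), MeasurableSet E → 0 < volume E → (matIntC V E).PosDef

/-- The matrix `𝓐_∞` class for Hermitian weights. -/
def MemAinfC {n d : ℕ} (V : (Fin n → ℝ) → Matrix (Fin d) (Fin d) ℂ) : Prop :=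
  ∀ ε : ℝ, 0 < ε → ∃ δ : ℝ, 0 < δ ∧ ∀ (x : Fin n → ℝ) (r : ℝ), 0 < r →
    ENNReal.ofReal (1 - ε) * volume (cube x r) ≤
      volume {y ∈ cube x r | (V y - δ • matAvgC V (cube x r)).PosSemidef}

/-- The geometric average `exp(⨍_s ln w)` of a nonnegative function, with the
conventions `ln 0 = -∞` and `exp (-∞) = 0`. -/
def geomMean {n : ℕ} (w : (Fin n → ℝ) → ℝ) (s : Set (Fin n → ℝ)) : ℝ :=
  @ite _ ((∀ᵐ y ∂(volume.restrict s), 0 < w y) ∧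
      IntegrableOn (fun y => Real.log (w y)) s) (Classical.dec _)
    (Real.exp (⨍ y in s, Real.log (w y))) 0

/-- The scalar `A_∞` class. -/
def ScalarAinf {n : ℕ} (w : (Fin n → ℝ) → ℝ) : Prop :=
  ∀ ε : ℝ, 0 < ε → ∃ δ : ℝ, 0 < δ ∧ ∀ (x : Fin n → ℝ) (r : ℝ), 0 < r →
    ENNReal.ofReal (1 - ε) * volume (cube x r) ≤
      volume {y ∈ cube x r | δ * ⨍ z in cube x r, w z ≤ w y}

end

/-!
On a cube `Q`, choose a unit vector `e` minimising `⟨(⨍_Q V) e, e⟩`. Since `λ₁(V) ≤ ⟨V e, e⟩`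
pointwise, the `𝓑_p` inequality in the direction `e` bounds `(⨍_Q λ₁(V)^p)^{1/p}` by
`C_V λ₁(⨍_Q V)`. Conversely, by `𝓐_∞` with `ε = 1/2`, on half of `Q` we have
`V ≥ δ ⨍_Q V`, hence `λ₁(V) ≥ δ λ₁(⨍_Q V)`, and Chebyshev's inequality gives
`λ₁(⨍_Q V) ≤ (2/δ) ⨍_Q λ₁(V)`.
-/

open MeasureTheory Set
open scoped ENNReal

section QuadraticForm

variable {d : ℕ}

lemma qf_sub (A B : Matrix (Fin d) (Fin d) ℝ) (e : Fin d → ℝ) :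
    qf (A - B) e = qf A e - qf B e := by
  simp only [qf, Matrix.sub_mulVec, dotProduct_sub]

lemma qf_smul (c : ℝ) (A : Matrix (Fin d) (Fin d) ℝ) (e : Fin d → ℝ) :
    qf (c • A) e = c * qf A e := by
  simp only [qf, Matrix.smul_mulVec, dotProduct_smul, smul_eq_mul]

lemma qf_nonneg_of_posSemidef {A : Matrix (Fin d) (Fin d) ℝ} (hA : A.PosSemidef)
    (e : Fin d → ℝ) : 0 ≤ qf A e := by
  simpa [qf] using hA.dotProduct_mulVec_nonneg e

lemma continuous_qf_uncurry :
    Continuous fun q : Matrix (Fin d) (Fin d) ℝ × (Fin d → ℝ) => qf q.1 q.2 :=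
  continuous_snd.dotProduct (continuous_fst.matrix_mulVec continuous_snd)

lemma qf_le_sqrt_vnormSq_mulVec {e : Fin d → ℝ} (he : vnormSq e = 1)
    (A : Matrix (Fin d) (Fin d) ℝ) : qf A e ≤ √(vnormSq (A.mulVec e)) := by
  have hcs := Real.sum_mul_le_sqrt_mul_sqrt Finset.univ e (A.mulVec e)
  rwa [show ∑ i, e i ^ 2 = 1 from he, Real.sqrt_one, one_mul] at hcs

lemma continuous_vnormSq : Continuous (vnormSq : (Fin d → ℝ) → ℝ) :=
  continuous_finsetSum _ fun i _ => (continuous_apply i).pow 2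

lemma isCompact_setOf_vnormSq_eq_one : IsCompact {e : Fin d → ℝ | vnormSq e = 1} := by
  refine Metric.isCompact_of_isClosed_isBounded (isClosed_eq continuous_vnormSq continuous_const)
    ((Metric.isBounded_closedBall (x := 0) (r := 1)).subset fun e he => ?_)
  rw [mem_closedBall_zero_iff, pi_norm_le_iff_of_nonneg zero_le_one]
  intro i
  rw [Real.norm_eq_abs, ← sq_le_one_iff_abs_le_one, ← he]
  exact Finset.single_le_sum (fun j _ => sq_nonneg (e j)) (Finset.mem_univ i)

lemma nonempty_setOf_vnormSq_eq_one (hd : 0 < d) : {e : Fin d → ℝ | vnormSq e = 1}.Nonempty :=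
  ⟨Pi.single ⟨0, hd⟩ 1, by simp [vnormSq, Pi.single_apply]⟩

lemma lam1_eq_sInf_image (A : Matrix (Fin d) (Fin d) ℝ) :
    lam1 A = sInf ((qf A) '' {e | vnormSq e = 1}) := by
  simp only [lam1, image, mem_ofPred_eq, eq_comm]

lemma continuous_lam1 : Continuous (lam1 : Matrix (Fin d) (Fin d) ℝ → ℝ) := by
  simp only [funext lam1_eq_sInf_image]
  exact isCompact_setOf_vnormSq_eq_one.continuous_sInf continuous_qf_uncurry

lemma isCompact_image_qf (A : Matrix (Fin d) (Fin d) ℝ) :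
    IsCompact ((qf A) '' {e | vnormSq e = 1}) :=
  isCompact_setOf_vnormSq_eq_one.image (continuous_qf_uncurry.comp (.prodMk_right A))

lemma lam1_le_qf {e : Fin d → ℝ} (he : vnormSq e = 1) (A : Matrix (Fin d) (Fin d) ℝ) :
    lam1 A ≤ qf A e := by
  rw [lam1_eq_sInf_image]
  exact csInf_le (isCompact_image_qf A).bddBelow (mem_image_of_mem _ he)

lemma exists_lam1_eq_qf (hd : 0 < d) (A : Matrix (Fin d) (Fin d) ℝ) :
    ∃ e : Fin d → ℝ, vnormSq e = 1 ∧ lam1 A = qf A e := by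
  obtain ⟨e, he, h⟩ := (isCompact_image_qf A).sInf_mem ((nonempty_setOf_vnormSq_eq_one hd).image _)
  exact ⟨e, he, by rw [lam1_eq_sInf_image, h]⟩

lemma le_lam1 (hd : 0 < d) {A : Matrix (Fin d) (Fin d) ℝ} {c : ℝ}
    (h : ∀ e : Fin d → ℝ, vnormSq e = 1 → c ≤ qf A e) : c ≤ lam1 A := by
  obtain ⟨e, he, h_eq⟩ := exists_lam1_eq_qf hd A
  exact h_eq ▸ h e he

lemma lam1_nonneg_of_posSemidef (hd : 0 < d) {A : Matrix (Fin d) (Fin d) ℝ}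
    (hA : A.PosSemidef) : 0 ≤ lam1 A :=
  le_lam1 hd fun e _ => qf_nonneg_of_posSemidef hA e

lemma mul_lam1_le_lam1_of_posSemidef_sub (hd : 0 < d) {A B : Matrix (Fin d) (Fin d) ℝ}
    {δ : ℝ} (hδ : 0 ≤ δ) (h : (A - δ • B).PosSemidef) : δ * lam1 B ≤ lam1 A := by
  refine le_lam1 hd fun e he => ?_
  have hAB := qf_nonneg_of_posSemidef h e
  rw [qf_sub, qf_smul] at hAB
  calc δ * lam1 B ≤ δ * qf B e := mul_le_mul_of_nonneg_left (lam1_le_qf he B) hδ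
    _ ≤ qf A e := by linarith

lemma sqrt_vnormSq_mulVec_le_matOpNorm {e : Fin d → ℝ} (he : vnormSq e = 1)
    (A : Matrix (Fin d) (Fin d) ℝ) : √(vnormSq (A.mulVec e)) ≤ matOpNorm A := by
  obtain ⟨M, hM⟩ := (isCompact_setOf_vnormSq_eq_one.image (f := fun e => √(vnormSq (A.mulVec e)))
    (continuous_vnormSq.comp (continuous_const.matrix_mulVec continuous_id)).sqrt).bddAbove
  exact le_csSup ⟨M, fun t ⟨e', he', ht⟩ => ht ▸ hM (mem_image_of_mem _ he')⟩ ⟨e, he, rfl⟩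

lemma qf_le_matOpNorm {e : Fin d → ℝ} (he : vnormSq e = 1) (A : Matrix (Fin d) (Fin d) ℝ) :
    qf A e ≤ matOpNorm A :=
  (qf_le_sqrt_vnormSq_mulVec he A).trans (sqrt_vnormSq_mulVec_le_matOpNorm he A)

lemma lam1_le_matOpNorm (hd : 0 < d) (A : Matrix (Fin d) (Fin d) ℝ) :
    lam1 A ≤ matOpNorm A := by
  obtain ⟨e, he, h⟩ := exists_lam1_eq_qf hd A
  exact h ▸ qf_le_matOpNorm he A

end QuadraticForm

section Average

variable {α : Type*} [MeasurableSpace α] {μ : Measure α} {f g : α → ℝ}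

lemma average_nonneg_of_ae (hf : 0 ≤ᵐ[μ] f) : 0 ≤ ⨍ x, f x ∂μ := by
  rw [average_eq, smul_eq_mul]
  exact mul_nonneg (by positivity) (integral_nonneg_of_ae hf)

lemma average_mono_ae (hf : Integrable f μ) (hg : Integrable g μ) (h : f ≤ᵐ[μ] g) :
    ⨍ x, f x ∂μ ≤ ⨍ x, g x ∂μ := by
  simp only [average_eq, smul_eq_mul]
  exact mul_le_mul_of_nonneg_left (integral_mono_ae hf hg h) (by positivity)

lemma MeasureTheory.Integrable.rpow_of_ae_le {p : ℝ} (hp : 0 ≤ p)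
    (hg : Integrable (fun x => g x ^ p) μ) (hf : AEStronglyMeasurable f μ)
    (hfg : ∀ᵐ x ∂μ, 0 ≤ f x ∧ f x ≤ g x) :
    Integrable (fun x => f x ^ p) μ := by
  refine hg.mono' (hf.aemeasurable.pow_const p).aestronglyMeasurable ?_
  filter_upwards [hfg] with x ⟨hf0, hfg⟩
  rw [Real.norm_of_nonneg (Real.rpow_nonneg hf0 p)]
  exact Real.rpow_le_rpow hf0 hfg hp

lemma mul_le_setAverage_of_le_measure {s : Set α} {c t : ℝ} (hs₀ : μ s ≠ 0) (hs : μ s ≠ ∞)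
    (hf₀ : 0 ≤ᵐ[μ.restrict s] f) (hf : IntegrableOn f s μ) (hc : 0 ≤ c) (ht : 0 ≤ t)
    (h : ENNReal.ofReal t * μ s ≤ μ {x ∈ s | c ≤ f x}) :
    t * c ≤ ⨍ x in s, f x ∂μ := by
  have hpos : 0 < μ.real s := ENNReal.toReal_pos hs₀ hs
  have : IsFiniteMeasure (μ.restrict s) := isFiniteMeasure_restrict.2 hs
  have hsub : μ {x ∈ s | c ≤ f x} ≤ μ.restrict s {x | c ≤ f x} :=
    (measure_mono (t := {x | c ≤ f x} ∩ s) fun x hx => ⟨hx.2, hx.1⟩).trans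
      (Measure.le_restrict_apply _ _)
  have hfrac : t * μ.real s ≤ (μ.restrict s).real {x | c ≤ f x} := by
    have := ENNReal.toReal_mono (measure_ne_top _ _) (h.trans hsub)
    rwa [ENNReal.toReal_mul, ENNReal.toReal_ofReal ht] at this
  rw [setAverage_eq, smul_eq_mul, le_inv_mul_iff₀ hpos]
  calc μ.real s * (t * c) = c * (t * μ.real s) := by ring
    _ ≤ c * (μ.restrict s).real {x | c ≤ f x} := mul_le_mul_of_nonneg_left hfrac hc
    _ ≤ ∫ x in s, f x ∂μ := mul_meas_ge_le_integral_of_nonneg hf₀ hf c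

end Average

section Cube

variable {n : ℕ}

lemma cube_eq_ball (x : Fin n → ℝ) {r : ℝ} (hr : 0 < r) : cube x r = Metric.ball x r := by
  ext y
  simp [cube, dist_pi_lt_iff hr, Real.dist_eq]

lemma volume_cube_ne_zero (x : Fin n → ℝ) {r : ℝ} (hr : 0 < r) : volume (cube x r) ≠ 0 :=
  cube_eq_ball x hr ▸ (Metric.measure_ball_pos volume x hr).ne'

lemma volume_cube_ne_top (x : Fin n → ℝ) {r : ℝ} (hr : 0 < r) : volume (cube x r) ≠ ∞ :=
  cube_eq_ball x hr ▸ measure_ball_lt_top.ne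

end Cube

section MatrixWeight

variable {n d : ℕ} {V : (Fin n → ℝ) → Matrix (Fin d) (Fin d) ℝ}

lemma IsMatrixWeight.measurable_comp (hW : IsMatrixWeight V)
    {F : Matrix (Fin d) (Fin d) ℝ → ℝ} (hF : Continuous F) : Measurable fun x => F (V x) :=
  (show Continuous fun M : Fin d → Fin d → ℝ => F (Matrix.of M) from hF).measurable.comp
    (measurable_pi_lambda _ fun i => measurable_pi_lambda _ fun j => hW.1 i j)

lemma IsMatrixWeight.lam1_nonneg_ae_restrict (hd : 0 < d) (hW : IsMatrixWeight V)
    (s : Set (Fin n → ℝ)) : 0 ≤ᵐ[volume.restrict s] fun y => lam1 (V y) := by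
  filter_upwards [ae_restrict_of_ae hW.2.1] with y hy
  exact lam1_nonneg_of_posSemidef hd hy

lemma IsMatrixWeight.integrableOn_lam1 (hd : 0 < d) (hW : IsMatrixWeight V) (x : Fin n → ℝ)
    {r : ℝ} (hr : 0 < r) : IntegrableOn (fun y => lam1 (V y)) (cube x r) := by
  refine (hW.2.2 x r hr).mono' (hW.measurable_comp continuous_lam1).aestronglyMeasurable ?_
  filter_upwards [ae_restrict_of_ae hW.2.1] with y hy
  rw [Real.norm_of_nonneg (lam1_nonneg_of_posSemidef hd hy)]
  exact lam1_le_matOpNorm hd (V y)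

lemma MemBp.integrableOn_lam1_rpow {p C : ℝ} (hd : 0 < d) (hW : IsMatrixWeight V)
    (hBp : MemBp p C V) (hp : 0 ≤ p) (x : Fin n → ℝ) {r : ℝ} (hr : 0 < r) :
    IntegrableOn (fun y => lam1 (V y) ^ p) (cube x r) := by
  refine Integrable.rpow_of_ae_le hp (hBp.1 x r hr)
    (hW.measurable_comp continuous_lam1).aestronglyMeasurable ?_
  filter_upwards [ae_restrict_of_ae hW.2.1] with y hy
  exact ⟨lam1_nonneg_of_posSemidef hd hy, lam1_le_matOpNorm hd (V y)⟩

lemma MemBp.integrableOn_qf_rpow {p C : ℝ} (hW : IsMatrixWeight V) (hBp : MemBp p C V)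
    (hp : 0 ≤ p) (x : Fin n → ℝ) {r : ℝ} (hr : 0 < r) {e : Fin d → ℝ} (he : vnormSq e = 1) :
    IntegrableOn (fun y => qf (V y) e ^ p) (cube x r) := by
  refine Integrable.rpow_of_ae_le hp (hBp.1 x r hr)
    (hW.measurable_comp (continuous_qf_uncurry.comp (.prodMk_left e))).aestronglyMeasurable ?_
  filter_upwards [ae_restrict_of_ae hW.2.1] with y hy
  exact ⟨qf_nonneg_of_posSemidef hy e, qf_le_matOpNorm he (V y)⟩

lemma MemBp.rpow_setAverage_lam1_le {p C : ℝ} (hd : 0 < d) (hW : IsMatrixWeight V)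
    (hBp : MemBp p C V) (hp : 0 ≤ p) (x : Fin n → ℝ) {r : ℝ} (hr : 0 < r) :
    (⨍ y in cube x r, lam1 (V y) ^ p) ^ (1 / p) ≤ C * lam1 (matAvg V (cube x r)) := by
  obtain ⟨e, he, hmin⟩ := exists_lam1_eq_qf hd (matAvg V (cube x r))
  have hpointwise : ∀ᵐ y ∂volume.restrict (cube x r), lam1 (V y) ^ p ≤ qf (V y) e ^ p := by
    filter_upwards [ae_restrict_of_ae hW.2.1] with y hy
    exact Real.rpow_le_rpow (lam1_nonneg_of_posSemidef hd hy) (lam1_le_qf he (V y)) hp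
  calc (⨍ y in cube x r, lam1 (V y) ^ p) ^ (1 / p)
      ≤ (⨍ y in cube x r, qf (V y) e ^ p) ^ (1 / p) := by
        refine Real.rpow_le_rpow (average_nonneg_of_ae ?_)
          (average_mono_ae (hBp.integrableOn_lam1_rpow hd hW hp x hr)
            (hBp.integrableOn_qf_rpow hW hp x hr he) hpointwise) (by positivity)
        filter_upwards [hW.lam1_nonneg_ae_restrict hd (cube x r)] with y hy
        exact Real.rpow_nonneg hy p
      _ ≤ C * lam1 (matAvg V (cube x r)) := hmin ▸ hBp.2 x r hr e

lemma MemAinf.exists_mul_lam1_le_setAverage (hd : 0 < d) (hW : IsMatrixWeight V)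
    (hAinf : MemAinf V) : ∃ δ > 0, ∀ (x : Fin n → ℝ) (r : ℝ), 0 < r →
      δ * lam1 (matAvg V (cube x r)) ≤ ⨍ y in cube x r, lam1 (V y) := by
  obtain ⟨δ, hδ, hA⟩ := hAinf (1 / 2) (by norm_num)
  refine ⟨δ / 2, by positivity, fun x r hr => ?_⟩
  set M := lam1 (matAvg V (cube x r))
  rcases le_or_gt M 0 with hM | hM
  · exact (mul_nonpos_of_nonneg_of_nonpos (by positivity) hM).trans
      (average_nonneg_of_ae (hW.lam1_nonneg_ae_restrict hd _))
  have hsub : {y ∈ cube x r | (V y - δ • matAvg V (cube x r)).PosSemidef} ⊆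
      {y ∈ cube x r | δ * M ≤ lam1 (V y)} :=
    fun y ⟨hy, hpsd⟩ => ⟨hy, mul_lam1_le_lam1_of_posSemidef_sub hd hδ.le hpsd⟩
  have hhalf := (hA x r hr).trans (measure_mono hsub)
  rw [show (1 : ℝ) - 1 / 2 = 1 / 2 by norm_num] at hhalf
  calc δ / 2 * M = 1 / 2 * (δ * M) := by ring
    _ ≤ ⨍ y in cube x r, lam1 (V y) :=
      mul_le_setAverage_of_le_measure (volume_cube_ne_zero x hr) (volume_cube_ne_top x hr)
        (hW.lam1_nonneg_ae_restrict hd _) (hW.integrableOn_lam1 hd x hr) (by positivity)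
        (by norm_num) hhalf

end MatrixWeight

theorem statement11_general {n d : ℕ} (hd : 1 ≤ d) (p C_V : ℝ) (hp : 1 < p)
    (hCV : 0 < C_V) (V : (Fin n → ℝ) → Matrix (Fin d) (Fin d) ℝ)
    (hW : IsMatrixWeight V) (hBp : MemBp p C_V V) (hAinf : MemAinf V) :
    ∃ C : ℝ, 0 < C ∧ MemBpScalar p C fun x => lam1 (V x) := by
  have hp₀ : 0 ≤ p := by linarith
  obtain ⟨δ, hδ, hlower⟩ := hAinf.exists_mul_lam1_le_setAverage hd hW
  refine ⟨C_V / δ, by positivity, fun x r hr => hBp.integrableOn_lam1_rpow hd hW hp₀ x hr,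
    fun x r hr => ?_⟩
  calc (⨍ y in cube x r, lam1 (V y) ^ p) ^ (1 / p)
      ≤ C_V * lam1 (matAvg V (cube x r)) := hBp.rpow_setAverage_lam1_le hd hW hp₀ x hr
    _ ≤ C_V * ((⨍ y in cube x r, lam1 (V y)) / δ) := by
      gcongr
      rw [le_div_iff₀ hδ, mul_comm]
      exact hlower x r hr
    _ = C_V / δ * ⨍ y in cube x r, lam1 (V y) := by ring

theorem statement11 {n d : ℕ} (hn : 1 ≤ n) (hd : 1 ≤ d) (p C_V : ℝ) (hp : 1 < p)
    (hCV : 0 < C_V) (V : (Fin n → ℝ) → Matrix (Fin d) (Fin d) ℝ)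
    (hW : IsMatrixWeight V) (hBp : MemBp p C_V V) (hAinf : MemAinf V) :
    ∃ C : ℝ, 0 < C ∧ MemBpScalar p C fun x => lam1 (V x) :=
  statement11_general hd p C_V hp hCV V hW hBp hAinf
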